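/- For each integer n ≥ 2, the equation x^{1/2} = (1 − x − x^2 − ⋯ − x^n)/(1 + x + x^2 + ⋯ + x^n), equivalently √x (1 + x + ⋯ + x^n) = 1 − x − ⋯ − x^n, has a root α_n ∈ (1/4, 1/3), and α_n → 1/4 as n → ∞. -/
import Mathlib

noncomputable def gfun17 (n : ℕ) (x : ℝ) : ℝ :=
  (∑ k ∈ Finset.range (n + 1), x ^ k) * (1 + Real.sqrt x)

lemma key17 (n : ℕ) (hn : 2 ≤ n) :
    ∃ x ∈ Set.Ioo (1/4 : ℝ) (min (1/3) (1/4 + (1/3)^n)), gfun17 n x = 2 := by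
  set b : ℝ := min (1/3) (1/4 + (1/3)^n) with hbdef
  have ht : (0:ℝ) < (1/3)^n := by positivity
  have hb4 : (1/4 : ℝ) < b := lt_min (by norm_num) (by linarith)
  have hb3 : b ≤ 1/3 := min_le_left _ _
  have hb0 : (0:ℝ) ≤ b := by linarith
  have hcont : ContinuousOn (gfun17 n) (Set.Icc (1/4) b) := by
    apply ContinuousOn.mul
    · exact (continuous_finset_sum _ fun k _ => continuous_pow k).continuousOn
    · exact (continuous_const.add Real.continuous_sqrt).continuousOn
  have hsq14 : Real.sqrt (1/4) = 1/2 := by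
    rw [show (1/4:ℝ) = (1/2)^2 by norm_num, Real.sqrt_sq (by norm_num)]
  have hgeom : ∀ x : ℝ, x ≠ 1 →
      ∑ k ∈ Finset.range (n + 1), x ^ k = (1 - x^(n+1)) / (1 - x) := by
    intro x hx
    rw [geom_sum_eq hx]
    rw [div_eq_div_iff (by intro h; apply hx; linarith) (by intro h; apply hx; linarith)]
    ring
  have h1 : gfun17 n (1/4) < 2 := by
    unfold gfun17
    rw [hsq14, hgeom (1/4) (by norm_num)]
    have h4 : (0:ℝ) < (1/4:ℝ)^(n+1) := by positivity
    rw [div_mul_eq_mul_div, div_lt_iff₀ (by norm_num)]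
    nlinarith
  have h2 : 2 < gfun17 n b := by
    unfold gfun17
    have hbne1 : b ≠ 1 := by intro h; rw [h] at hb3; norm_num at hb3
    rw [hgeom b hbne1]
    have hsqb : (1/2:ℝ) ≤ Real.sqrt b := by
      rw [← hsq14]; exact Real.sqrt_le_sqrt hb4.le
    have hbpow : b^(n+1) ≤ (1/3:ℝ)^(n+1) := pow_le_pow_left₀ hb0 hb3 _
    have hkey : 1 < 4*b - 3*b^(n+1) := by
      rcases min_cases (1/3:ℝ) (1/4 + (1/3)^n) with ⟨he, hle⟩ | ⟨he, hle⟩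
      · -- b = 1/3
        have hn3 : (1/3:ℝ)^n ≤ (1/3)^2 := pow_le_pow_of_le_one (by norm_num) (by norm_num) hn
        have : (1/3:ℝ)^(n+1) = (1/3)^n * (1/3) := by ring
        rw [← hbdef] at he
        nlinarith
      · -- b = 1/4 + (1/3)^n
        rw [← hbdef] at he
        have : (1/3:ℝ)^(n+1) = (1/3)^n * (1/3) := by ring
        nlinarith
    have hpos : 0 < 1 - b := by linarith
    have hS : (4:ℝ)/3 < (1 - b^(n+1)) / (1 - b) := by
      rw [lt_div_iff₀ hpos]; nlinarith
    nlinarith [hS, hsqb]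
  have := intermediate_value_Ioo hb4.le hcont ⟨h1, h2⟩
  obtain ⟨x, hx, hgx⟩ := this
  exact ⟨x, hx, hgx⟩

lemma sum_split17 (x : ℝ) (n : ℕ) :
    ∑ k ∈ Finset.range (n + 1), x ^ k = 1 + ∑ k ∈ Finset.Icc 1 n, x ^ k := by
  have h : Finset.range (n + 1) = insert 0 (Finset.Icc 1 n) := by
    ext k; simp [Finset.mem_range, Finset.mem_Icc]; omega
  rw [h, Finset.sum_insert (by simp)]
  simp

theorem stmt_17 :
    ∃ α : ℕ → ℝ,
      (∀ n, 2 ≤ n →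
        α n ∈ Set.Ioo (1/4 : ℝ) (1/3) ∧
        Real.sqrt (α n) * ∑ k ∈ Finset.range (n + 1), (α n) ^ k
          = 1 - ∑ k ∈ Finset.Icc 1 n, (α n) ^ k) ∧
      Filter.Tendsto α Filter.atTop (nhds (1/4 : ℝ)) := by
  classical
  refine ⟨fun n => if h : 2 ≤ n then (key17 n h).choose else 1/4, ?_, ?_⟩
  · intro n hn
    simp only [dif_pos hn]
    obtain ⟨hmem, heq⟩ := (key17 n hn).choose_spec
    set x := (key17 n hn).choose
    have hx3 : x < 1/3 := lt_of_lt_of_le hmem.2 (min_le_left _ _)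
    refine ⟨⟨hmem.1, hx3⟩, ?_⟩
    unfold gfun17 at heq
    have hs := sum_split17 x n
    nlinarith [heq, hs]
  · have hlow : ∀ᶠ n in Filter.atTop, (1/4:ℝ) ≤ (if h : 2 ≤ n then (key17 n h).choose else 1/4) := by
      filter_upwards [Filter.eventually_ge_atTop 2] with n hn
      rw [dif_pos hn]
      exact ((key17 n hn).choose_spec.1).1.le
    have hhigh : ∀ᶠ n in Filter.atTop,
        (if h : 2 ≤ n then (key17 n h).choose else 1/4) ≤ 1/4 + (1/3:ℝ)^n := by
      filter_upwards [Filter.eventually_ge_atTop 2] with n hn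
      rw [dif_pos hn]
      have := ((key17 n hn).choose_spec.1).2
      have h2 := min_le_right (1/3:ℝ) (1/4 + (1/3)^n)
      linarith [lt_of_lt_of_le this h2]
    have htend : Filter.Tendsto (fun n => (1/4:ℝ) + (1/3)^n) Filter.atTop (nhds (1/4)) := by
      have := tendsto_pow_atTop_nhds_zero_of_lt_one (by norm_num : (0:ℝ) ≤ 1/3) (by norm_num)
      have h := Filter.Tendsto.const_add (1/4:ℝ) this
      simpa using h
    exact tendsto_of_tendsto_of_tendsto_of_le_of_le' tendsto_const_nhds htend hlow hhigh
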